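/- Let (γₙ) be a sequence in PSL(2,ℝ) and let η⁺, η⁻ ∈ ∂ℍ. Assume that for every z ∈ ℍ one has γₙ·z → η⁺ and γₙ⁻¹·z → η⁻ in the compactification ℍ ∪ ∂ℍ (viewed inside ℂ ∪ {∞}). Then for every ξ ∈ ∂ℍ with ξ ≠ η⁻, the sequence γₙ(ξ) converges to η⁺ in ∂ℍ. -/

import Mathlib

noncomputable section

open Matrix MatrixGroups MeasureTheory Filter Topology OnePoint
open scoped UpperHalfPlane

/-- `SL(2, ℝ)`. -/
abbrev SL2 : Type := Matrix.SpecialLinearGroup (Fin 2) ℝ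

/-- `PSL(2, ℝ) = SL(2, ℝ)/{±1}`, the quotient of `SL(2, ℝ)` by its center. -/
abbrev PSL2 : Type := Matrix.ProjectiveSpecialLinearGroup (Fin 2) ℝ

/-- Topology on `SL(2, ℝ)`, induced from the space of matrices. -/
instance : TopologicalSpace SL2 :=
  TopologicalSpace.induced (fun g : SL2 => (g : Matrix (Fin 2) (Fin 2) ℝ)) inferInstance

/-- The quotient topology on `PSL(2, ℝ)`. -/
instance : TopologicalSpace PSL2 := instTopologicalSpaceQuotient

instance : MeasurableSpace PSL2 := borel PSL2

/-- The group `G = PSL(2, ℝ) × PSL(2, ℝ)`. -/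
abbrev G2 : Type := PSL2 × PSL2

/-- The projection `SL(2, ℝ) → PSL(2, ℝ)`. -/
def pr : SL2 →* PSL2 := QuotientGroup.mk' (Subgroup.center SL2)

/-- A representative in `SL(2, ℝ)` of an element of `PSL(2, ℝ)`.  (All the constructions
below built from `rep` are in fact independent of the choice of representative, because the
two lifts of an element of `PSL(2, ℝ)` differ only by sign.) -/
def rep (x : PSL2) : SL2 := Quotient.out x

/-- The boundary `∂ℍ = ℝ ∪ {∞}` of the upper half-plane. -/
abbrev Bdry : Type := OnePoint ℝ

/-- The extended Möbius action of `SL(2, ℝ)` on `∂ℍ = ℝ ∪ {∞}`. -/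
def mobSL (g : SL2) (p : Bdry) : Bdry :=
  p.elim (if g 1 0 = 0 then ∞ else ((g 0 0 / g 1 0 : ℝ) : Bdry))
    (fun x => if g 1 0 * x + g 1 1 = 0 then ∞
      else (((g 0 0 * x + g 0 1) / (g 1 0 * x + g 1 1) : ℝ) : Bdry))

/-- The extended Möbius action of `PSL(2, ℝ)` on the boundary `∂ℍ = ℝ ∪ {∞}`
(independent of the choice of representative, since `-g` and `g` act alike). -/
def mob (x : PSL2) (p : Bdry) : Bdry := mobSL (rep x) p

/-- The Möbius action of `PSL(2, ℝ)` on the upper half-plane `ℍ`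
(independent of the choice of representative, since `-g` and `g` act alike). -/
def hact (x : PSL2) (z : ℍ) : ℍ := rep x • z

/-- The componentwise action of `G` on `ℍ × ℍ`. -/
def hact2 (x : G2) (z : ℍ × ℍ) : ℍ × ℍ := (hact x.1 z.1, hact x.2 z.2)

/-- The componentwise action of `G` on the Furstenberg boundary `F = ∂ℍ × ∂ℍ`. -/
def mob2 (x : G2) (ξ : Bdry × Bdry) : Bdry × Bdry := (mob x.1 ξ.1, mob x.2 ξ.2)

/-- The diagonal matrix `diag (exp t, exp (-t))` in `SL(2, ℝ)`; as `t` ranges over `ℝ`,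
these (together with their negatives) are exactly the diagonal matrices `±diag (λ, λ⁻¹)`
with `λ > 0`. -/
def dm (t : ℝ) : SL2 :=
  ⟨!![Real.exp t, 0; 0, Real.exp (-t)], by
    simp [Matrix.det_fin_two_of, ← Real.exp_add]⟩

lemma dm_mul (t s : ℝ) : dm t * dm s = dm (t + s) := by
  apply Subtype.ext
  rw [Matrix.SpecialLinearGroup.coe_mul]
  show !![Real.exp t, 0; 0, Real.exp (-t)] * !![Real.exp s, 0; 0, Real.exp (-s)] =
    !![Real.exp (t + s), 0; 0, Real.exp (-(t + s))]
  rw [Matrix.mul_fin_two]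
  norm_num [← Real.exp_add]
  ring_nf

lemma dm_zero : dm 0 = 1 := by
  apply Subtype.ext
  simp [dm, Matrix.one_fin_two]

/-- The maximal diagonal subgroup `A` of `G = PSL(2, ℝ) × PSL(2, ℝ)`. -/
def Adiag : Subgroup G2 where
  carrier := {x | ∃ t s : ℝ, x = (pr (dm t), pr (dm s))}
  mul_mem' := by
    rintro _ _ ⟨t, s, rfl⟩ ⟨t', s', rfl⟩
    exact ⟨t + t', s + s', by simp [Prod.ext_iff, ← _root_.map_mul, dm_mul]⟩
  one_mem' := ⟨0, 0, by simp [dm_zero, Prod.ext_iff]⟩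
  inv_mem' := by
    rintro _ ⟨t, s, rfl⟩
    refine ⟨-t, -s, ?_⟩
    have h1 : dm (-t) * dm t = 1 := by rw [dm_mul]; simpa using dm_zero
    have h2 : dm (-s) * dm s = 1 := by rw [dm_mul]; simpa using dm_zero
    simp [Prod.ext_iff, eq_comm, eq_inv_iff_mul_eq_one, ← _root_.map_mul, h1, h2]

/-- The diagonal sub-semigroup `A⁺` of `G` (diagonal entries `λᵢ = exp tᵢ ≥ 1`). -/
def Apos : Set G2 := {x | ∃ t s : ℝ, 0 ≤ t ∧ 0 ≤ s ∧ x = (pr (dm t), pr (dm s))}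

/-- The absolute value of the trace, well defined on `PSL(2, ℝ)`. -/
def trAbs (x : PSL2) : ℝ := |((rep x : Matrix (Fin 2) (Fin 2) ℝ)).trace|

/-- An element of `PSL(2, ℝ)` is hyperbolic if `|trace| > 2`. -/
def IsHyperbolicPSL (x : PSL2) : Prop := 2 < trAbs x

/-- An element of `PSL(2, ℝ)` is parabolic if it is nontrivial and `|trace| = 2`. -/
def IsParabolicPSL (x : PSL2) : Prop := x ≠ 1 ∧ trAbs x = 2

/-- An element of `PSL(2, ℝ)` is elliptic if `|trace| < 2`. -/
def IsEllipticPSL (x : PSL2) : Prop := trAbs x < 2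

/-- The dominant eigenvalue `(|tr| + √(tr² - 4))/2` of (a lift of) an element of
`PSL(2, ℝ)`; for a hyperbolic element this is its dominant (> 1) eigenvalue. -/
def domEig (x : PSL2) : ℝ := (trAbs x + Real.sqrt (trAbs x ^ 2 - 4)) / 2

/-- An element of `G` is hyperbolic if both components are. -/
def IsHyperbolicG (γ : G2) : Prop := IsHyperbolicPSL γ.1 ∧ IsHyperbolicPSL γ.2

/-- An element of `G` is parabolic if both components are. -/
def IsParabolicG (γ : G2) : Prop := IsParabolicPSL γ.1 ∧ IsParabolicPSL γ.2

/-- An element of `G` is elliptic if both components are. -/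
def IsEllipticG (γ : G2) : Prop := IsEllipticPSL γ.1 ∧ IsEllipticPSL γ.2

/-- A nontrivial element of `G` is mixed if its two components are not of the same kind. -/
def IsMixed (γ : G2) : Prop :=
  γ ≠ 1 ∧ ¬ IsHyperbolicG γ ∧ ¬ IsParabolicG γ ∧ ¬ IsEllipticG γ

/-- A hyperbolic element of `G` is hyper-regular if the dominant eigenvalues of its two
components are distinct. -/
def IsHyperRegular (γ : G2) : Prop := IsHyperbolicG γ ∧ domEig γ.1 ≠ domEig γ.2

/-- `Γ` is an irreducible lattice of `G = PSL(2, ℝ) × PSL(2, ℝ)`: it is discrete, of finite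
covolume for Haar measure, both coordinate projections have dense image, and `Γ` meets the
kernel of each coordinate projection trivially. -/
structure IsIrreducibleLattice (Γ : Subgroup G2) : Prop where
  discrete : DiscreteTopology Γ
  finiteCovolume : ∃ μ : Measure G2, μ.IsHaarMeasure ∧
    ∃ s : Set G2, IsFundamentalDomain Γ s μ ∧ μ s < ⊤
  dense_fst : Dense (Prod.fst '' (Γ : Set G2))
  dense_snd : Dense (Prod.snd '' (Γ : Set G2))
  ker_fst : ∀ γ ∈ Γ, γ.1 = 1 → γ = 1
  ker_snd : ∀ γ ∈ Γ, γ.2 = 1 → γ = 1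

/-- The quotient `Γ \ G` by right cosets, with the quotient topology. -/
abbrev RQ (Γ : Subgroup G2) : Type := Quotient (QuotientGroup.rightRel Γ)

/-- The class `Γ g` of `g` in `Γ \ G`. -/
def rmk (Γ : Subgroup G2) (g : G2) : RQ Γ := Quotient.mk (QuotientGroup.rightRel Γ) g

/-- The orbit `x A` of `x = Γ g` in `Γ \ G` under right translation by `A`. -/
def orbA (Γ : Subgroup G2) (g : G2) : Set (RQ Γ) := {y | ∃ a ∈ Adiag, y = rmk Γ (g * a)}

/-- The semi-orbit `x A⁺` of `x = Γ g` in `Γ \ G` under right translation by `A⁺`. -/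
def orbApos (Γ : Subgroup G2) (g : G2) : Set (RQ Γ) := {y | ∃ a ∈ Apos, y = rmk Γ (g * a)}

/-- The inclusion `ℍ ⊆ ℂ ∪ {∞}` into the one-point compactification of `ℂ`. -/
def hToC (z : ℍ) : OnePoint ℂ := ((z : ℂ) : OnePoint ℂ)

/-- The inclusion `∂ℍ = ℝ ∪ {∞} ⊆ ℂ ∪ {∞}`. -/
def bToC (p : Bdry) : OnePoint ℂ := OnePoint.map (fun x : ℝ => (x : ℂ)) p

/-!
Lift `γₙ` to `gₙ ∈ SL(2, ℝ)` and pass to a subsequence along which `cₙ gₙ → L ≠ 0` for some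
scalars `cₙ`. In homogeneous coordinates `gₙ z = [gₙ (z, 1)]` tends to `[L (z, 1)]`; as this
limit is the real point `η⁺`, the matrix `L` has rank one with image spanned by `η⁺`, say
`L = η⁺ vᵀ`. Since `cₙ gₙ⁻¹ = adj (cₙ gₙ) → adj L`, the same argument shows that the image of
`adj L`, which is the kernel of `L`, is spanned by `η⁻`. So for `ξ ≠ η⁻` we have `v ⬝ ξ ≠ 0`
and `gₙ ξ → [L ξ] = [(v ⬝ ξ) η⁺] = η⁺`.
-/

namespace OnePoint

section Field

variable {K : Type*} [Field K]

def homog (p : OnePoint K) : Fin 2 → K := p.elim ![1, 0] fun x => ![x, 1]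

@[simp] lemma homog_infty : homog (∞ : OnePoint K) = ![1, 0] := rfl

@[simp] lemma homog_coe (x : K) : homog (x : OnePoint K) = ![x, 1] := rfl

lemma homog_ne_zero (p : OnePoint K) : homog p ≠ 0 := by
  cases p using OnePoint.rec <;> simp [funext_iff, Fin.forall_fin_two]

lemma eq_of_dotProduct_homog_eq_zero {v : Fin 2 → K} (hv : v ≠ 0) {p q : OnePoint K}
    (hp : v ⬝ᵥ homog p = 0) (hq : v ⬝ᵥ homog q = 0) : p = q := by
  have hv' : v 0 ≠ 0 ∨ v 1 ≠ 0 := by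
    by_contra! h
    exact hv (funext <| Fin.forall_fin_two.mpr h)
  cases p using OnePoint.rec <;> cases q using OnePoint.rec <;>
    simp only [homog_infty, homog_coe, dotProduct, Fin.sum_univ_two, Matrix.cons_val_zero,
      Matrix.cons_val_one, mul_one, mul_zero, add_zero, coe_eq_coe] at hp hq ⊢
  · simp_all
  · simp_all
  · have h0 : v 0 ≠ 0 := by
      rintro h0
      simp_all
    exact mul_left_cancel₀ h0 (by linear_combination hp - hq)

variable [DecidableEq K]

/-- The point `[v 0 : v 1]`, with the junk value `∞` at `v = 0`. -/
def ofHomog (v : Fin 2 → K) : OnePoint K := if v 1 = 0 then ∞ else ↑(v 0 / v 1)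

@[simp] lemma ofHomog_homog (p : OnePoint K) : ofHomog (homog p) = p := by
  cases p using OnePoint.rec <;> simp [ofHomog]

lemma ofHomog_eq_infty_iff {v : Fin 2 → K} : ofHomog v = ∞ ↔ v 1 = 0 := by
  unfold ofHomog
  split_ifs <;> simp_all

lemma ofHomog_eq_coe_iff {v : Fin 2 → K} {x : K} :
    ofHomog v = x ↔ v 1 ≠ 0 ∧ v 0 = x * v 1 := by
  unfold ofHomog
  split_ifs with h
  · simp [h]
  · simp [h, div_eq_iff h]

lemma ofHomog_smul {c : K} (hc : c ≠ 0) (v : Fin 2 → K) : ofHomog (c • v) = ofHomog v := by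
  simp [ofHomog, hc, mul_div_mul_left]

end Field

variable {K : Type*} [NontriviallyNormedField K] [ProperSpace K] [DecidableEq K]

lemma tendsto_ofHomog {v : Fin 2 → K} (hv : v ≠ 0) :
    Tendsto ofHomog (𝓝 v) (𝓝 (ofHomog v)) := by
  by_cases h1 : v 1 = 0
  · have h0 : v 0 ≠ 0 := fun h0 => hv (funext <| Fin.forall_fin_two.mpr ⟨h0, h1⟩)
    rw [ofHomog_eq_infty_iff.mpr h1]
    refine tendsto_const_nhds.if ?_
    have hden : Tendsto (fun w : Fin 2 → K => w 1) (𝓝 v ⊓ 𝓟 {w | ¬ w 1 = 0}) (𝓝[≠] 0) :=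
      tendsto_nhdsWithin_iff.mpr ⟨h1 ▸ (continuous_apply 1).continuousAt.mono_left inf_le_left,
        eventually_inf_principal.mpr (Eventually.of_forall fun _ => id)⟩
    have hnum : Tendsto (fun w : Fin 2 → K => ‖w 0‖) (𝓝 v ⊓ 𝓟 {w | ¬ w 1 = 0}) (𝓝 ‖v 0‖) :=
      ((continuous_apply 0).norm.tendsto v).mono_left inf_le_left
    have hquot := hnum.pos_mul_atTop (norm_pos_iff.mpr h0)
      (tendsto_norm_inv_nhdsNE_zero_atTop.comp hden)
    refine tendsto_coe_infty.comp ?_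
    rw [coclosedCompact_eq_cocompact, ← Metric.cobounded_eq_cocompact,
      ← tendsto_norm_atTop_iff_cobounded]
    simpa [div_eq_mul_inv] using hquot
  · have hev : ∀ᶠ w in 𝓝 v, ofHomog w = ((w 0 / w 1 : K) : OnePoint K) := by
      filter_upwards [(continuous_apply 1).continuousAt.eventually_ne h1] with w hw
      simp [ofHomog, hw]
    rw [tendsto_congr' hev,
      show ofHomog v = ((v 0 / v 1 : K) : OnePoint K) by simp [ofHomog, h1]]
    exact (continuous_coe.tendsto _).comp
      (((continuous_apply 0).tendsto v).div ((continuous_apply 1).tendsto v) h1)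

end OnePoint

lemma adjugate_ne_zero_of_ne_zero {R : Type*} [CommRing R] {L : Matrix (Fin 2) (Fin 2) R}
    (hL : L ≠ 0) : adjugate L ≠ 0 := by
  intro h
  apply hL
  rw [adjugate_fin_two, ← Matrix.ext_iff] at h
  simp only [Fin.forall_fin_two, of_apply, cons_val', cons_val_zero, cons_val_one,
    empty_val', cons_val_fin_one, Matrix.zero_apply, neg_eq_zero] at h
  ext i j
  fin_cases i <;> fin_cases j <;> simp [h]

lemma exists_subseq_smul_tendsto_ne_zero {E : Type*} [NormedAddCommGroup E] [NormedSpace ℝ E]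
    [ProperSpace E] {u : ℕ → E} (hu : ∀ n, u n ≠ 0) :
    ∃ φ : ℕ → ℕ, StrictMono φ ∧ ∃ c : ℕ → ℝ, (∀ n, c n ≠ 0) ∧
      ∃ L ≠ 0, Tendsto (fun n => c n • u (φ n)) atTop (𝓝 L) := by
  obtain ⟨L, hL, φ, hφ, hlim⟩ := (isCompact_sphere (0 : E) 1).tendsto_subseq
    (x := fun n => ‖u n‖⁻¹ • u n) fun n => by simp [norm_smul, hu n]
  exact ⟨φ, hφ, fun n => ‖u (φ n)‖⁻¹, fun n => by simp [hu], L,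
    ne_zero_of_mem_sphere one_ne_zero ⟨L, hL⟩, hlim⟩

lemma Complex.eq_of_ofReal_mul_add_ofReal {z : ℂ} (hz : z.im ≠ 0) {a b c d : ℝ}
    (h : (a : ℂ) * z + b = c * z + d) : a = c ∧ b = d := by
  have ha : a = c := mul_right_cancel₀ hz (by simpa using congrArg Complex.im h)
  subst ha
  exact ⟨rfl, by exact_mod_cast add_left_cancel h⟩

lemma Complex.ofReal_mul_add_ofReal_eq_zero {z : ℂ} (hz : z.im ≠ 0) {a b : ℝ}
    (h : (a : ℂ) * z + b = 0) : a = 0 ∧ b = 0 :=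
  Complex.eq_of_ofReal_mul_add_ofReal hz (c := 0) (d := 0) (by simpa using h)

lemma map_ofReal_mulVec_ne_zero {L : Matrix (Fin 2) (Fin 2) ℝ} (hL : L ≠ 0) {z : ℂ}
    (hz : z.im ≠ 0) : L.map ((↑) : ℝ → ℂ) *ᵥ ![z, 1] ≠ 0 := by
  intro h
  obtain ⟨h00, h01⟩ := Complex.ofReal_mul_add_ofReal_eq_zero hz (by simpa using congrFun h 0)
  obtain ⟨h10, h11⟩ := Complex.ofReal_mul_add_ofReal_eq_zero hz (by simpa using congrFun h 1)
  exact hL (Matrix.ext fun i j => by fin_cases i <;> fin_cases j <;> assumption)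

lemma mobSL_eq_ofHomog (g : SL2) (p : Bdry) :
    mobSL g p = ofHomog ((g : Matrix (Fin 2) (Fin 2) ℝ) *ᵥ homog p) := by
  cases p using OnePoint.rec <;> simp [mobSL, ofHomog]

lemma hToC_smul (g : SL2) (z : ℍ) :
    hToC (g • z) =
      ofHomog ((g : Matrix (Fin 2) (Fin 2) ℝ).map ((↑) : ℝ → ℂ) *ᵥ ![(z : ℂ), 1]) := by
  have hden : ((g 1 0 : ℝ) : ℂ) * z + (g 1 1 : ℝ) ≠ 0 := fun h => by
    obtain ⟨h10, h11⟩ := Complex.ofReal_mul_add_ofReal_eq_zero z.im_ne_zero h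
    have hdet := g.det_coe
    rw [Matrix.det_fin_two, h10, h11] at hdet
    simp at hdet
  simp [hToC, ofHomog, hden, UpperHalfPlane.coe_specialLinearGroup_apply]

lemma smul_eq_self_of_mem_center {c : SL2} (hc : c ∈ Subgroup.center SL2) (z : ℍ) :
    c • z = z := by
  obtain ⟨r, hr, hcr⟩ := Matrix.SpecialLinearGroup.mem_center_iff.mp hc
  have hr0 : (r : ℂ) ≠ 0 := by rintro h; simp_all
  ext
  simp [UpperHalfPlane.coe_specialLinearGroup_apply, ← hcr, hr0]

lemma hact_inv (x : PSL2) (z : ℍ) : hact x⁻¹ z = (rep x)⁻¹ • z := by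
  have hpr : pr (rep x)⁻¹ = pr (rep x⁻¹) := by
    simp only [map_inv, pr, rep, QuotientGroup.mk'_apply, QuotientGroup.out_eq']
  obtain ⟨c, hc, hcx⟩ := (QuotientGroup.mk'_eq_mk' _).mp hpr
  rw [hact, ← hcx, mul_smul, smul_eq_self_of_mem_center hc]

lemma exists_eq_vecMulVec_of_ofHomog_eq_bToC {L : Matrix (Fin 2) (Fin 2) ℝ} {z : ℂ}
    (hz : z.im ≠ 0) {η : Bdry} (h : ofHomog (L.map ((↑) : ℝ → ℂ) *ᵥ ![z, 1]) = bToC η) :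
    ∃ v, L = vecMulVec (homog η) v := by
  cases η using OnePoint.rec with
  | infty =>
    obtain ⟨h10, h11⟩ := Complex.ofReal_mul_add_ofReal_eq_zero hz
      (by simpa [ofHomog_eq_infty_iff, bToC] using h)
    exact ⟨![L 0 0, L 0 1], Matrix.ext fun i j => by
      fin_cases i <;> fin_cases j <;> simp [h10, h11]⟩
  | coe x =>
    obtain ⟨-, hx⟩ := ofHomog_eq_coe_iff.mp (by simpa [bToC] using h)
    obtain ⟨h00, h01⟩ := Complex.eq_of_ofReal_mul_add_ofReal hz (c := x * L 1 0)
      (d := x * L 1 1) (by push_cast; simpa [mul_add, mul_assoc] using hx)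
    exact ⟨![L 1 0, L 1 1], Matrix.ext fun i j => by
      fin_cases i <;> fin_cases j <;> simp [vecMulVec_apply, h00, h01]⟩

section NormalizedLimit

variable {g : ℕ → SL2} {c : ℕ → ℝ} {L : Matrix (Fin 2) (Fin 2) ℝ}

lemma tendsto_hToC_smul (hc : ∀ n, c n ≠ 0) (hL : L ≠ 0)
    (hgL : Tendsto (fun n => c n • (g n : Matrix (Fin 2) (Fin 2) ℝ)) atTop (𝓝 L)) (z : ℍ) :
    Tendsto (fun n => hToC (g n • z)) atTop
      (𝓝 (ofHomog (L.map ((↑) : ℝ → ℂ) *ᵥ ![(z : ℂ), 1]))) := by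
  have hcont : Continuous fun M : Matrix (Fin 2) (Fin 2) ℝ =>
      M.map ((↑) : ℝ → ℂ) *ᵥ ![(z : ℂ), 1] :=
    (continuous_id.matrix_map Complex.continuous_ofReal).matrix_mulVec continuous_const
  refine ((tendsto_ofHomog (map_ofReal_mulVec_ne_zero hL z.im_ne_zero)).comp
    ((hcont.tendsto L).comp hgL)).congr fun n => ?_
  rw [Function.comp_apply, Function.comp_apply, Matrix.map_smul' _ _ _ Complex.ofReal_mul,
    smul_mulVec, ofHomog_smul (Complex.ofReal_ne_zero.mpr (hc n)), hToC_smul]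

lemma exists_eq_vecMulVec_of_tendsto (hc : ∀ n, c n ≠ 0) (hL : L ≠ 0)
    (hgL : Tendsto (fun n => c n • (g n : Matrix (Fin 2) (Fin 2) ℝ)) atTop (𝓝 L)) (z : ℍ)
    {η : Bdry} (hη : Tendsto (fun n => hToC (g n • z)) atTop (𝓝 (bToC η))) :
    ∃ v, L = vecMulVec (homog η) v :=
  exists_eq_vecMulVec_of_ofHomog_eq_bToC z.im_ne_zero
    (tendsto_nhds_unique (tendsto_hToC_smul hc hL hgL z) hη)

lemma tendsto_smul_inv
    (hgL : Tendsto (fun n => c n • (g n : Matrix (Fin 2) (Fin 2) ℝ)) atTop (𝓝 L)) :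
    Tendsto (fun n => c n • (((g n)⁻¹ : SL2) : Matrix (Fin 2) (Fin 2) ℝ)) atTop
      (𝓝 (adjugate L)) :=
  ((continuous_id.matrix_adjugate.tendsto L).comp hgL).congr fun n => by
    simp [Matrix.SpecialLinearGroup.coe_inv, adjugate_smul]

theorem tendsto_mobSL_of_smul_tendsto (hc : ∀ n, c n ≠ 0) (hL : L ≠ 0)
    (hgL : Tendsto (fun n => c n • (g n : Matrix (Fin 2) (Fin 2) ℝ)) atTop (𝓝 L)) (z : ℍ)
    {ηp ηm : Bdry} (hp : Tendsto (fun n => hToC (g n • z)) atTop (𝓝 (bToC ηp)))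
    (hm : Tendsto (fun n => hToC ((g n)⁻¹ • z)) atTop (𝓝 (bToC ηm)))
    {ξ : Bdry} (hξ : ξ ≠ ηm) :
    Tendsto (fun n => mobSL (g n) ξ) atTop (𝓝 ηp) := by
  obtain ⟨v, rfl⟩ := exists_eq_vecMulVec_of_tendsto hc hL hgL z hp
  obtain ⟨w, hw⟩ := exists_eq_vecMulVec_of_tendsto (g := fun n => (g n)⁻¹) hc
    (adjugate_ne_zero_of_ne_zero hL) (tendsto_smul_inv hgL) z hm
  have hv : v ≠ 0 := by rintro rfl; simp at hL
  have hw0 : w ≠ 0 := by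
    rintro rfl
    exact adjugate_ne_zero_of_ne_zero hL (by simpa using hw)
  -- `L * adjugate L = det L • 1 = 0` for the rank-one matrix `L`
  have hvm : v ⬝ᵥ homog ηm = 0 := by
    have h := mul_adjugate (vecMulVec (homog ηp) v)
    rw [hw, vecMulVec_mul_vecMulVec, det_vecMulVec, zero_smul, vecMulVec_eq_zero] at h
    simpa [homog_ne_zero, hw0] using h
  have hvξ : v ⬝ᵥ homog ξ ≠ 0 := fun h => hξ (eq_of_dotProduct_homog_eq_zero hv h hvm)
  have hLξ : vecMulVec (homog ηp) v *ᵥ homog ξ = (v ⬝ᵥ homog ξ) • homog ηp := by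
    rw [vecMulVec_mulVec, op_smul_eq_smul]
  have hlim := (tendsto_ofHomog (v := vecMulVec (homog ηp) v *ᵥ homog ξ)
    (hLξ ▸ smul_ne_zero hvξ (homog_ne_zero _))).comp
    (((continuous_id.matrix_mulVec continuous_const).tendsto _).comp hgL)
  rw [hLξ, ofHomog_smul hvξ, ofHomog_homog] at hlim
  refine hlim.congr fun n => ?_
  simp only [Function.comp_apply, id, mobSL_eq_ofHomog, smul_mulVec, ofHomog_smul (hc n)]

end NormalizedLimit

attribute [local instance] Matrix.normedAddCommGroup Matrix.normedSpace

/-- If a sequence `(γₙ)` in `PSL(2, ℝ)` satisfies `γₙ·z → η⁺` and `γₙ⁻¹·z → η⁻` in the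
compactification `ℍ ∪ ∂ℍ ⊆ ℂ ∪ {∞}` for every `z ∈ ℍ`, then `γₙ(ξ) → η⁺` for every
boundary point `ξ ≠ η⁻`. -/
theorem tendsto_boundary_of_tendsto_interior
    (γ : ℕ → PSL2) (ηp ηm : Bdry)
    (h : ∀ z : ℍ,
      Tendsto (fun n => hToC (hact (γ n) z)) atTop (𝓝 (bToC ηp)) ∧
      Tendsto (fun n => hToC (hact (γ n)⁻¹ z)) atTop (𝓝 (bToC ηm))) :
    ∀ ξ : Bdry, ξ ≠ ηm → Tendsto (fun n => mob (γ n) ξ) atTop (𝓝 ηp) := by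
  intro ξ hξ
  refine tendsto_of_subseq_tendsto fun ns hns => ?_
  obtain ⟨φ, hφ, c, hc, L, hL, hgL⟩ := exists_subseq_smul_tendsto_ne_zero
    (u := fun n => (rep (γ (ns n)) : Matrix (Fin 2) (Fin 2) ℝ)) fun n h0 => by
      simpa [h0] using (rep (γ (ns n))).det_coe
  have hsub : Tendsto (ns ∘ φ) atTop atTop := hns.comp hφ.tendsto_atTop
  refine ⟨φ, tendsto_mobSL_of_smul_tendsto hc hL hgL UpperHalfPlane.I
    ((h _).1.comp hsub) ?_ hξ⟩
  simpa only [hact_inv, Function.comp_def] using (h _).2.comp hsub
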